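/- Let ξ ∼ Bernoulli(q) be independent of T ∼ p(T). Then for every θ ∈ ℝ^p, E_{ξ, p(T)}[‖G(θ, T, ξ)‖₂²] ≤ (1 + q^{−1}((1 + αL₂)^r − 1))² L₁². -/

import Mathlib

open MeasureTheory ProbabilityTheory Filter Asymptotics

noncomputable section

/-- `ℝ^p` with the Euclidean inner product. -/
abbrev Vec (p : ℕ) := EuclideanSpace ℝ (Fin p)

/-- One inner gradient-descent step `φ ↦ φ − α ∇_φ L^in(φ, T)`. -/
def gdStep (p : ℕ) (α : ℝ) {Ωt : Type*} (Lin : Vec p → Ωt → ℝ) (T : Ωt) (φ : Vec p) : Vec p :=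
  φ - α • gradient (fun ψ => Lin ψ T) φ

/-- The `r`-step inner gradient-descent map `U(θ, T)`. -/
def U (p : ℕ) (α : ℝ) (r : ℕ) {Ωt : Type*} (Lin : Vec p → Ωt → ℝ) (θ : Vec p) (T : Ωt) : Vec p :=
  (gdStep p α Lin T)^[r] θ

/-- Assumption 1 of the paper: `L^in(·,T), L^out(·,T)` are twice differentiable with
uniformly bounded gradients (for `L^out`) and Hessians, and the Hessian of `L^in`
is uniformly Lipschitz.  The Hessian is `fderiv ℝ (gradient ·)` and `‖·‖` on it is
the operator norm. -/
def Assumption1 (p : ℕ) {Ωt : Type*} (Lin Lout : Vec p → Ωt → ℝ) (L₁ L₂ L₃ : ℝ) : Prop :=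
  0 < L₁ ∧ 0 < L₂ ∧ 0 < L₃ ∧
  ∀ T : Ωt,
    Differentiable ℝ (fun φ => Lin φ T) ∧
    Differentiable ℝ (gradient (fun φ => Lin φ T)) ∧
    Differentiable ℝ (fun φ => Lout φ T) ∧
    Differentiable ℝ (gradient (fun φ => Lout φ T)) ∧
    (∀ φ, ‖gradient (fun ψ => Lout ψ T) φ‖ ≤ L₁) ∧
    (∀ φ, ‖fderiv ℝ (gradient (fun ψ => Lin ψ T)) φ‖ ≤ L₂) ∧
    (∀ φ, ‖fderiv ℝ (gradient (fun ψ => Lout ψ T)) φ‖ ≤ L₂) ∧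
    (∀ φ ψ, ‖fderiv ℝ (gradient (fun χ => Lin χ T)) φ
              - fderiv ℝ (gradient (fun χ => Lin χ T)) ψ‖ ≤ L₃ * ‖φ - ψ‖)

/-- The exact outer gradient `∇_θ L^out(U(θ,T), T)` of the map `θ ↦ L^out(U(θ,T),T)`. -/
def outerGrad (p : ℕ) (α : ℝ) (r : ℕ) {Ωt : Type*} (Lin Lout : Vec p → Ωt → ℝ)
    (θ : Vec p) (T : Ωt) : Vec p :=
  gradient (fun θ' => Lout (U p α r Lin θ' T) T) θ

/-- The BLO objective `M(θ) = E_{T ∼ p(T)}[L^out(U(θ,T),T)]`. -/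
def Mobj (p : ℕ) (α : ℝ) (r : ℕ) {Ωt : Type*} [MeasurableSpace Ωt] (μ : Measure Ωt)
    (Lin Lout : Vec p → Ωt → ℝ) (θ : Vec p) : ℝ :=
  ∫ T, Lout (U p α r Lin θ T) T ∂μ

/-- Assumption 2 of the paper: `M(θ)`, `∇M(θ)` and `E[∇_θ L^out(U(θ,T),T)]` are
well-defined, `∇M(θ) = E[∇_θ L^out(U(θ,T),T)]`, and `M* = inf M > −∞`. -/
def Assumption2 (p : ℕ) (α : ℝ) (r : ℕ) {Ωt : Type*} [MeasurableSpace Ωt] (μ : Measure Ωt)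
    (Lin Lout : Vec p → Ωt → ℝ) : Prop :=
  (∀ θ, Integrable (fun T => Lout (U p α r Lin θ T) T) μ) ∧
  (∀ θ T, DifferentiableAt ℝ (fun θ' => Lout (U p α r Lin θ' T) T) θ) ∧
  (∀ θ, Integrable (fun T => outerGrad p α r Lin Lout θ T) μ) ∧
  (∀ θ, DifferentiableAt ℝ (Mobj p α r μ Lin Lout) θ) ∧
  (∀ θ, gradient (Mobj p α r μ Lin Lout) θ = ∫ T, outerGrad p α r Lin Lout θ T ∂μ) ∧
  BddBelow (Set.range (Mobj p α r μ Lin Lout))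

/-- The UFO-BLO gradient estimator
`G(θ,T,x) = ∇_{φ_r} L^out(φ_r,T) + (x/q)(∇_θ L^out(φ_r,T) − ∇_{φ_r} L^out(φ_r,T))`. -/
def Gest (p : ℕ) (α : ℝ) (r : ℕ) (q : ℝ) {Ωt : Type*} (Lin Lout : Vec p → Ωt → ℝ)
    (θ : Vec p) (T : Ωt) (x : ℝ) : Vec p :=
  gradient (fun φ => Lout φ T) (U p α r Lin θ T)
    + (x / q) • (outerGrad p α r Lin Lout θ T
                  - gradient (fun φ => Lout φ T) (U p α r Lin θ T))

/-- The `Bernoulli(q)` distribution on `Bool`. -/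
def bern (q : ℝ) : Measure Bool :=
  (ENNReal.ofReal q) • Measure.dirac true + (ENNReal.ofReal (1 - q)) • Measure.dirac false

/-! The inner map `U(·, T)` is an `r`-fold composition of maps whose derivatives are
`α L₂`-close to the identity, so by the chain rule its derivative is
`((1 + α L₂)^r − 1)`-close to the identity. Hence the exact outer gradient differs from
`∇L^out(φ_r, T)` by at most `((1 + α L₂)^r − 1) L₁`, and `‖G(θ, T, x)‖` is bounded by
`(1 + q⁻¹((1 + α L₂)^r − 1)) L₁` for every task and every coin outcome; the second moment
is then at most its square. -/

theorem norm_fderiv_iterate_sub_id_le {𝕜 E : Type*} [NontriviallyNormedField 𝕜]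
    [NormedAddCommGroup E] [NormedSpace 𝕜 E] {f : E → E} (hf : Differentiable 𝕜 f) {c : ℝ}
    (hc : 0 ≤ c) (hf' : ∀ x, ‖fderiv 𝕜 f x - ContinuousLinearMap.id 𝕜 E‖ ≤ c)
    (n : ℕ) (x : E) :
    ‖fderiv 𝕜 f^[n] x - ContinuousLinearMap.id 𝕜 E‖ ≤ (1 + c) ^ n - 1 := by
  induction n generalizing x with
  | zero => simp
  | succ n ih =>
    set A := fderiv 𝕜 f (f^[n] x)
    set B := fderiv 𝕜 f^[n] x
    have hB : ‖B‖ ≤ (1 + c) ^ n :=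
      calc ‖B‖ = ‖(B - ContinuousLinearMap.id 𝕜 E) + ContinuousLinearMap.id 𝕜 E‖ := by
            rw [sub_add_cancel]
        _ ≤ ((1 + c) ^ n - 1) + 1 :=
            (norm_add_le _ _).trans (add_le_add (ih x) ContinuousLinearMap.norm_id_le)
        _ = (1 + c) ^ n := by ring
    have hchain : fderiv 𝕜 f^[n + 1] x = A.comp B := by
      rw [Function.iterate_succ']
      exact fderiv_comp x (hf _) (hf.iterate n x)
    have hsplit : A.comp B - ContinuousLinearMap.id 𝕜 E
        = (A - ContinuousLinearMap.id 𝕜 E).comp B + (B - ContinuousLinearMap.id 𝕜 E) := by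
      ext v; simp
    calc ‖fderiv 𝕜 f^[n + 1] x - ContinuousLinearMap.id 𝕜 E‖
        ≤ ‖A - ContinuousLinearMap.id 𝕜 E‖ * ‖B‖
            + ‖B - ContinuousLinearMap.id 𝕜 E‖ := by
          rw [hchain, hsplit]
          exact (norm_add_le _ _).trans
            (add_le_add_left (ContinuousLinearMap.opNorm_comp_le _ _) _)
      _ ≤ c * (1 + c) ^ n + ((1 + c) ^ n - 1) := by gcongr; exacts [hf' _, ih x]
      _ = (1 + c) ^ (n + 1) - 1 := by ring

theorem norm_fderiv_sub_smul_sub_id {𝕜 E : Type*} [NontriviallyNormedField 𝕜]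
    [NormedAddCommGroup E] [NormedSpace 𝕜 E] {g : E → E} {x : E}
    (hg : DifferentiableAt 𝕜 g x) (a : 𝕜) :
    ‖fderiv 𝕜 (fun y => y - a • g y) x - ContinuousLinearMap.id 𝕜 E‖
      = ‖a‖ * ‖fderiv 𝕜 g x‖ := by
  have h : HasFDerivAt (fun y => y - a • g y)
      (ContinuousLinearMap.id 𝕜 E - a • fderiv 𝕜 g x) x :=
    (hasFDerivAt_id x).sub (hg.hasFDerivAt.const_smul a)
  rw [h.fderiv, sub_sub_cancel_left, norm_neg, norm_smul]

theorem norm_gradient_comp_sub_gradient_le {E : Type*} [NormedAddCommGroup E]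
    [InnerProductSpace ℝ E] [CompleteSpace E] {g : E → ℝ} {V : E → E} {x : E}
    (hg : DifferentiableAt ℝ g (V x)) (hV : DifferentiableAt ℝ V x) :
    ‖gradient (g ∘ V) x - gradient g (V x)‖
      ≤ ‖gradient g (V x)‖ * ‖fderiv ℝ V x - ContinuousLinearMap.id ℝ E‖ := by
  have hsub : fderiv ℝ (g ∘ V) x - fderiv ℝ g (V x)
      = (fderiv ℝ g (V x)).comp (fderiv ℝ V x - ContinuousLinearMap.id ℝ E) := by
    rw [fderiv_comp x hg hV]; ext v; simp
  simp only [gradient]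
  rw [← map_sub, LinearIsometryEquiv.norm_map, LinearIsometryEquiv.norm_map, hsub]
  exact ContinuousLinearMap.opNorm_comp_le _ _

theorem norm_add_div_smul_le {E : Type*} [NormedAddCommGroup E] [NormedSpace ℝ E]
    (a v : E) {x q : ℝ} (hx₀ : 0 ≤ x) (hx₁ : x ≤ 1) (hq : 0 < q) :
    ‖a + (x / q) • v‖ ≤ ‖a‖ + q⁻¹ * ‖v‖ := by
  have hxq : |x / q| ≤ q⁻¹ := by
    rw [abs_of_nonneg (by positivity), div_eq_mul_inv]
    exact mul_le_of_le_one_left (by positivity) hx₁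
  calc ‖a + (x / q) • v‖ ≤ ‖a‖ + |x / q| * ‖v‖ := by
        rw [← Real.norm_eq_abs, ← norm_smul]; exact norm_add_le _ _
    _ ≤ ‖a‖ + q⁻¹ * ‖v‖ := by gcongr

theorem isProbabilityMeasure_bern {q : ℝ} (hq₀ : 0 ≤ q) (hq₁ : q ≤ 1) :
    IsProbabilityMeasure (bern q) := by
  constructor
  simp only [bern, Measure.add_apply, Measure.smul_apply, measure_univ, smul_eq_mul, mul_one]
  rw [← ENNReal.ofReal_add hq₀ (sub_nonneg.2 hq₁), add_sub_cancel, ENNReal.ofReal_one]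

section Estimator

variable {p r : ℕ} {α q L₁ L₂ : ℝ} {Ωt : Type*} {Lin Lout : Vec p → Ωt → ℝ}
  {T : Ωt}

theorem differentiable_gdStep (hd : Differentiable ℝ (gradient fun φ => Lin φ T)) :
    Differentiable ℝ (gdStep p α Lin T) :=
  differentiable_id.sub (hd.const_smul α)

theorem norm_fderiv_U_sub_id_le (hα : 0 ≤ α) (hL₂ : 0 ≤ L₂)
    (hd : Differentiable ℝ (gradient fun φ => Lin φ T))
    (hH : ∀ φ, ‖fderiv ℝ (gradient fun ψ => Lin ψ T) φ‖ ≤ L₂) (θ : Vec p) :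
    ‖fderiv ℝ (fun θ' => U p α r Lin θ' T) θ - ContinuousLinearMap.id ℝ (Vec p)‖
      ≤ (1 + α * L₂) ^ r - 1 := by
  refine norm_fderiv_iterate_sub_id_le (differentiable_gdStep hd) (mul_nonneg hα hL₂)
    (fun φ => ?_) r θ
  refine (norm_fderiv_sub_smul_sub_id (hd φ) α).trans_le ?_
  rw [Real.norm_of_nonneg hα]
  exact mul_le_mul_of_nonneg_left (hH φ) hα

theorem norm_outerGrad_sub_gradient_le (hα : 0 ≤ α) (hL₂ : 0 ≤ L₂)
    (hLin : Differentiable ℝ (gradient fun φ => Lin φ T))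
    (hLout : Differentiable ℝ fun φ => Lout φ T)
    (hg : ∀ φ, ‖gradient (fun ψ => Lout ψ T) φ‖ ≤ L₁)
    (hH : ∀ φ, ‖fderiv ℝ (gradient fun ψ => Lin ψ T) φ‖ ≤ L₂) (θ : Vec p) :
    ‖outerGrad p α r Lin Lout θ T - gradient (fun φ => Lout φ T) (U p α r Lin θ T)‖
      ≤ L₁ * ((1 + α * L₂) ^ r - 1) := by
  have hU : Differentiable ℝ fun θ' => U p α r Lin θ' T :=
    (differentiable_gdStep hLin).iterate r
  calc _ ≤ ‖gradient (fun φ => Lout φ T) (U p α r Lin θ T)‖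
          * ‖fderiv ℝ (fun θ' => U p α r Lin θ' T) θ
              - ContinuousLinearMap.id ℝ (Vec p)‖ :=
        norm_gradient_comp_sub_gradient_le (V := fun θ' => U p α r Lin θ' T)
          (hLout _) (hU θ)
    _ ≤ L₁ * ((1 + α * L₂) ^ r - 1) :=
        mul_le_mul (hg _) (norm_fderiv_U_sub_id_le hα hL₂ hLin hH θ) (norm_nonneg _)
          ((norm_nonneg _).trans (hg 0))

theorem norm_Gest_le (hα : 0 ≤ α) (hL₂ : 0 ≤ L₂) (hq : 0 < q)
    (hLin : Differentiable ℝ (gradient fun φ => Lin φ T))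
    (hLout : Differentiable ℝ fun φ => Lout φ T)
    (hg : ∀ φ, ‖gradient (fun ψ => Lout ψ T) φ‖ ≤ L₁)
    (hH : ∀ φ, ‖fderiv ℝ (gradient fun ψ => Lin ψ T) φ‖ ≤ L₂) (θ : Vec p) {x : ℝ}
    (hx₀ : 0 ≤ x) (hx₁ : x ≤ 1) :
    ‖Gest p α r q Lin Lout θ T x‖ ≤ (1 + q⁻¹ * ((1 + α * L₂) ^ r - 1)) * L₁ := by
  have hdiff := norm_outerGrad_sub_gradient_le (r := r) hα hL₂ hLin hLout hg hH θ
  calc _ ≤ L₁ + q⁻¹ * (L₁ * ((1 + α * L₂) ^ r - 1)) :=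
        (norm_add_div_smul_le _ _ hx₀ hx₁ hq).trans
          (add_le_add (hg _) (mul_le_mul_of_nonneg_left hdiff (inv_nonneg.2 hq.le)))
    _ = _ := by ring

end Estimator

theorem ufo_blo_second_moment_bound_general
    (p r : ℕ) (α : ℝ) (hα : 0 < α)
    (Ωt : Type*) [MeasurableSpace Ωt]
    (μ : Measure Ωt) [IsProbabilityMeasure μ]
    (Lin Lout : Vec p → Ωt → ℝ) (L₁ L₂ L₃ : ℝ)
    (hA1 : Assumption1 p Lin Lout L₁ L₂ L₃)
    (q : ℝ) (hq : q ∈ Set.Ioc (0 : ℝ) 1)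
    (θ : Vec p) :
    (∫ z : Ωt × Bool,
        ‖Gest p α r q Lin Lout θ z.1 (if z.2 then 1 else 0)‖ ^ 2 ∂(μ.prod (bern q)))
      ≤ (1 + q⁻¹ * ((1 + α * L₂) ^ r - 1)) ^ 2 * L₁ ^ 2 := by
  obtain ⟨-, hL₂, -, hT⟩ := hA1
  obtain ⟨hq₀, hq₁⟩ := hq
  set C := (1 + q⁻¹ * ((1 + α * L₂) ^ r - 1)) * L₁
  have hG : ∀ z : Ωt × Bool,
      ‖Gest p α r q Lin Lout θ z.1 (if z.2 then 1 else 0)‖ ≤ C := by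
    rintro ⟨T, b⟩
    obtain ⟨-, hLin, hLout, -, hg, hH, -⟩ := hT T
    exact norm_Gest_le hα.le hL₂.le hq₀ hLin hLout hg hH θ (by split_ifs <;> norm_num)
      (by split_ifs <;> norm_num)
  have := isProbabilityMeasure_bern hq₀.le hq₁
  calc _ ≤ ‖∫ z : Ωt × Bool, ‖Gest p α r q Lin Lout θ z.1 (if z.2 then 1 else 0)‖ ^ 2
          ∂(μ.prod (bern q))‖ := le_abs_self _
    _ ≤ C ^ 2 * (μ.prod (bern q)).real Set.univ := by
        refine norm_integral_le_of_norm_le_const (Eventually.of_forall fun z => ?_)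
        rw [norm_pow, norm_norm]
        exact pow_le_pow_left₀ (norm_nonneg _) (hG z) 2
    _ = _ := by rw [probReal_univ, mul_one, mul_pow]

theorem ufo_blo_second_moment_bound
    (p r : ℕ) (α : ℝ) (hα : 0 < α)
    (Ωt : Type*) [Nonempty Ωt] [MeasurableSpace Ωt]
    (μ : Measure Ωt) [IsProbabilityMeasure μ]
    (Lin Lout : Vec p → Ωt → ℝ) (L₁ L₂ L₃ : ℝ)
    (hA1 : Assumption1 p Lin Lout L₁ L₂ L₃)
    (q : ℝ) (hq : q ∈ Set.Ioc (0 : ℝ) 1)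
    (θ : Vec p) :
    (∫ z : Ωt × Bool,
        ‖Gest p α r q Lin Lout θ z.1 (if z.2 then 1 else 0)‖ ^ 2 ∂(μ.prod (bern q)))
      ≤ (1 + q⁻¹ * ((1 + α * L₂) ^ r - 1)) ^ 2 * L₁ ^ 2 :=
  ufo_blo_second_moment_bound_general p r α hα Ωt μ Lin Lout L₁ L₂ L₃ hA1 q hq θ
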